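/- Let θ be irrational and badly approximable, i.e. there is κ > 0 with |nθ − m| ≥ κ/n for all integers m, n with n > 0. Let m/n be a continued fraction convergent of θ (so |nθ − m| < 1/n), with n ≥ 128/κ. Define j > n to be n-irregular if γ(j) ≠ γ(j−n), where γ(j) ∈ Γ₀ depends on which arc (k/8,(k+1)/8) mod 1 contains jθ as above. Then every n-irregular index j satisfies j − n > κn/128. -/

import Mathlib

/-!
The maximizer of `Re (γ e^{2πix})` over `Γ₀` is constant on every open arc `(k/8, (k+1)/8)`.
Since `nθ` lies within `1/n` of the integer `m`, the points `(j - n)θ` and `jθ` differ mod 1 by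
less than `1/n`; so if `γ(j) ≠ γ(j - n)`, some `k/8` lies within `1/n` of `(j - n)θ`. Bad
approximability applied to the denominator `8(j - n)` then gives `κn < 64(j - n)`.
-/

open Complex

noncomputable def Gamma0 : Finset ℂ :=
  {-2, 2 * I, -2 * I, 1 + 2 * I, 1 - 2 * I}

def IsGammaSeq (θ : ℝ) (γ : ℕ → ℂ) : Prop :=
  ∀ j : ℕ, 1 ≤ j → γ j ∈ Gamma0 ∧
    ∀ γ' ∈ Gamma0, (γ' * Complex.exp (2 * Real.pi * θ * j * I)).re ≤
      (γ j * Complex.exp (2 * Real.pi * θ * j * I)).re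

open Real Set

lemma Real.sin_add_pi_div_four (φ : ℝ) :
    Real.sin (φ + π / 4) = √2 / 2 * (Real.sin φ + Real.cos φ) := by
  rw [Real.sin_add, cos_pi_div_four, sin_pi_div_four]; ring

lemma Real.cos_add_pi_div_four (φ : ℝ) :
    Real.cos (φ + π / 4) = √2 / 2 * (Real.cos φ - Real.sin φ) := by
  rw [Real.cos_add, cos_pi_div_four, sin_pi_div_four]; ring

noncomputable def phaseRe (γ : ℂ) (x : ℝ) : ℝ := (γ * Complex.exp (2 * π * x * I)).re

lemma phaseRe_eq (γ : ℂ) (x : ℝ) :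
    phaseRe γ x = γ.re * Real.cos (2 * π * x) - γ.im * Real.sin (2 * π * x) := by
  rw [phaseRe, show (2 * π * x * I : ℂ) = ((2 * π * x : ℝ) : ℂ) * I by push_cast; ring,
    Complex.mul_re, Complex.exp_ofReal_mul_I_re, Complex.exp_ofReal_mul_I_im]

lemma phaseRe_add_intCast (γ : ℂ) (x : ℝ) (p : ℤ) : phaseRe γ (x + p) = phaseRe γ x := by
  rw [phaseRe, phaseRe, Complex.ofReal_add, Complex.ofReal_intCast,
    show 2 * π * (x + p) * I = 2 * π * x * I + p * (2 * π * I) by ring,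
    Complex.exp_add, Complex.exp_int_mul_two_pi_mul_I, mul_one]

lemma IsGammaSeq.phaseRe_le {θ : ℝ} {γ : ℕ → ℂ} (hγ : IsGammaSeq θ γ) {j : ℕ} (hj : 1 ≤ j)
    (p : ℤ) : ∀ γ' ∈ Gamma0, phaseRe γ' (θ * j - p) ≤ phaseRe (γ j) (θ * j - p) := by
  intro γ' hγ'
  have := (hγ j hj).2 γ' hγ'
  rwa [← phaseRe_add_intCast _ _ p, ← phaseRe_add_intCast (γ j) _ p, sub_add_cancel, phaseRe,
    phaseRe, Complex.ofReal_mul, Complex.ofReal_natCast, ← mul_assoc]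

def IsStrictMaxAt (g : ℂ) (x : ℝ) : Prop :=
  g ∈ Gamma0 ∧ ∀ γ ∈ Gamma0, γ ≠ g → phaseRe γ x < phaseRe g x

lemma IsStrictMaxAt.eq {g γ : ℂ} {x : ℝ} (hg : IsStrictMaxAt g x) (hγ : γ ∈ Gamma0)
    (hmax : ∀ γ' ∈ Gamma0, phaseRe γ' x ≤ phaseRe γ x) : γ = g := by
  by_contra hne
  exact (hg.2 γ hγ hne).not_ge (hmax g hg.1)

lemma isStrictMaxAt_add_intCast {g : ℂ} {x : ℝ} (p : ℤ) :
    IsStrictMaxAt g (x + p) ↔ IsStrictMaxAt g x := by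
  simp only [IsStrictMaxAt, phaseRe_add_intCast]

lemma isStrictMaxAt_one_sub_two_I {x : ℝ} (hx : x ∈ Ioo 0 (1 / 4)) :
    IsStrictMaxAt (1 - 2 * I) x := by
  obtain ⟨h0, h1⟩ := hx
  have hs : 0 < Real.sin (2 * π * x) :=
    sin_pos_of_pos_of_lt_pi (by positivity) (by nlinarith [pi_pos])
  have hc : 0 < Real.cos (2 * π * x) :=
    cos_pos_of_mem_Ioo ⟨by nlinarith [pi_pos], by nlinarith [pi_pos]⟩
  refine ⟨by simp [Gamma0], ?_⟩
  simp only [Gamma0, Finset.mem_insert, Finset.mem_singleton]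
  rintro γ (rfl | rfl | rfl | rfl | rfl) hne <;>
    first | exact absurd rfl hne | (norm_num [phaseRe_eq]; linarith)

lemma isStrictMaxAt_neg_two_I {x : ℝ} (hx : x ∈ Ioo (1 / 4) (3 / 8)) :
    IsStrictMaxAt (-2 * I) x := by
  obtain ⟨h0, h1⟩ := hx
  have hc : Real.cos (2 * π * x) < 0 :=
    cos_neg_of_pi_div_two_lt_of_lt (by nlinarith [pi_pos]) (by nlinarith [pi_pos])
  have hsc : 0 < Real.sin (2 * π * x) + Real.cos (2 * π * x) := by
    have : 0 < Real.sin (2 * π * x + π / 4) :=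
      sin_pos_of_pos_of_lt_pi (by nlinarith [pi_pos]) (by nlinarith [pi_pos])
    rw [sin_add_pi_div_four] at this
    exact pos_of_mul_pos_right this (by positivity)
  refine ⟨by simp [Gamma0], ?_⟩
  simp only [Gamma0, Finset.mem_insert, Finset.mem_singleton]
  rintro γ (rfl | rfl | rfl | rfl | rfl) hne <;>
    first | exact absurd rfl hne | (norm_num [phaseRe_eq]; linarith)

lemma isStrictMaxAt_neg_two {x : ℝ} (hx : x ∈ Ioo (3 / 8) (5 / 8)) :
    IsStrictMaxAt (-2) x := by
  obtain ⟨h0, h1⟩ := hx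
  have hsc : Real.sin (2 * π * x) + Real.cos (2 * π * x) < 0 := by
    have : 0 < Real.sin (2 * π * x + π / 4 - π) :=
      sin_pos_of_pos_of_lt_pi (by nlinarith [pi_pos]) (by nlinarith [pi_pos])
    rw [Real.sin_sub_pi, sin_add_pi_div_four, neg_pos] at this
    exact neg_of_mul_neg_right this (by positivity)
  have hcs : Real.cos (2 * π * x) - Real.sin (2 * π * x) < 0 := by
    have : Real.cos (2 * π * x + π / 4) < 0 :=
      cos_neg_of_pi_div_two_lt_of_lt (by nlinarith [pi_pos]) (by nlinarith [pi_pos])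
    rw [cos_add_pi_div_four] at this
    exact neg_of_mul_neg_right this (by positivity)
  refine ⟨by simp [Gamma0], ?_⟩
  simp only [Gamma0, Finset.mem_insert, Finset.mem_singleton]
  rintro γ (rfl | rfl | rfl | rfl | rfl) hne <;>
    first | exact absurd rfl hne | (norm_num [phaseRe_eq]; linarith)

lemma isStrictMaxAt_two_I {x : ℝ} (hx : x ∈ Ioo (5 / 8) (3 / 4)) :
    IsStrictMaxAt (2 * I) x := by
  obtain ⟨h0, h1⟩ := hx
  have hc : Real.cos (2 * π * x) < 0 :=
    cos_neg_of_pi_div_two_lt_of_lt (by nlinarith [pi_pos]) (by nlinarith [pi_pos])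
  have hcs : 0 < Real.cos (2 * π * x) - Real.sin (2 * π * x) := by
    have : 0 < Real.cos (2 * π * x + π / 4 - 2 * π) :=
      cos_pos_of_mem_Ioo ⟨by nlinarith [pi_pos], by nlinarith [pi_pos]⟩
    rw [Real.cos_sub_two_pi, cos_add_pi_div_four] at this
    exact pos_of_mul_pos_right this (by positivity)
  refine ⟨by simp [Gamma0], ?_⟩
  simp only [Gamma0, Finset.mem_insert, Finset.mem_singleton]
  rintro γ (rfl | rfl | rfl | rfl | rfl) hne <;>
    first | exact absurd rfl hne | (norm_num [phaseRe_eq]; linarith)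

lemma isStrictMaxAt_one_add_two_I {x : ℝ} (hx : x ∈ Ioo (3 / 4) 1) :
    IsStrictMaxAt (1 + 2 * I) x := by
  obtain ⟨h0, h1⟩ := hx
  have hs : Real.sin (2 * π * x) < 0 := by
    rw [← Real.sin_sub_two_pi]
    exact sin_neg_of_neg_of_neg_pi_lt (by nlinarith [pi_pos]) (by nlinarith [pi_pos])
  have hc : 0 < Real.cos (2 * π * x) := by
    rw [← Real.cos_sub_two_pi]
    exact cos_pos_of_mem_Ioo ⟨by nlinarith [pi_pos], by nlinarith [pi_pos]⟩
  refine ⟨by simp [Gamma0], ?_⟩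
  simp only [Gamma0, Finset.mem_insert, Finset.mem_singleton]
  rintro γ (rfl | rfl | rfl | rfl | rfl) hne <;>
    first | exact absurd rfl hne | (norm_num [phaseRe_eq]; linarith)

def eighthArc (k : ℤ) : Set ℝ := Ioo ((k : ℝ) / 8) ((k + 1) / 8)

lemma exists_isStrictMaxAt_on_eighthArc_of_lt_eight {e : ℤ} (he0 : 0 ≤ e) (he8 : e < 8) :
    ∃ g, ∀ x ∈ eighthArc e, IsStrictMaxAt g x := by
  interval_cases e <;> push_cast [eighthArc]
  · exact ⟨_, fun _ hx =>
      isStrictMaxAt_one_sub_two_I (Ioo_subset_Ioo (by norm_num) (by norm_num) hx)⟩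
  · exact ⟨_, fun _ hx =>
      isStrictMaxAt_one_sub_two_I (Ioo_subset_Ioo (by norm_num) (by norm_num) hx)⟩
  · exact ⟨_, fun _ hx =>
      isStrictMaxAt_neg_two_I (Ioo_subset_Ioo (by norm_num) (by norm_num) hx)⟩
  · exact ⟨_, fun _ hx =>
      isStrictMaxAt_neg_two (Ioo_subset_Ioo (by norm_num) (by norm_num) hx)⟩
  · exact ⟨_, fun _ hx =>
      isStrictMaxAt_neg_two (Ioo_subset_Ioo (by norm_num) (by norm_num) hx)⟩
  · exact ⟨_, fun _ hx =>
      isStrictMaxAt_two_I (Ioo_subset_Ioo (by norm_num) (by norm_num) hx)⟩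
  · exact ⟨_, fun _ hx =>
      isStrictMaxAt_one_add_two_I (Ioo_subset_Ioo (by norm_num) (by norm_num) hx)⟩
  · exact ⟨_, fun _ hx =>
      isStrictMaxAt_one_add_two_I (Ioo_subset_Ioo (by norm_num) (by norm_num) hx)⟩

lemma exists_isStrictMaxAt_on_eighthArc (k : ℤ) :
    ∃ g, ∀ x ∈ eighthArc k, IsStrictMaxAt g x := by
  obtain ⟨g, hg⟩ := exists_isStrictMaxAt_on_eighthArc_of_lt_eight
    (k.emod_nonneg (by norm_num : (8 : ℤ) ≠ 0)) (k.emod_lt_of_pos (by norm_num))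
  refine ⟨g, fun x hx => ?_⟩
  have hk : (k : ℝ) = (k % 8 : ℤ) + 8 * (k / 8 : ℤ) := by
    exact_mod_cast (Int.emod_add_mul_ediv k 8).symm
  rw [eighthArc, hk, mem_Ioo] at hx
  rw [← sub_add_cancel x (k / 8 : ℤ), isStrictMaxAt_add_intCast]
  exact hg _ ⟨by linarith, by linarith⟩

lemma eq_of_isMax_of_mem_eighthArc {k : ℤ} {x y : ℝ} {γ₁ γ₂ : ℂ} (hx : x ∈ eighthArc k)
    (hy : y ∈ eighthArc k) (h₁ : γ₁ ∈ Gamma0) (hmax₁ : ∀ γ ∈ Gamma0, phaseRe γ x ≤ phaseRe γ₁ x)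
    (h₂ : γ₂ ∈ Gamma0) (hmax₂ : ∀ γ ∈ Gamma0, phaseRe γ y ≤ phaseRe γ₂ y) : γ₁ = γ₂ := by
  obtain ⟨g, hg⟩ := exists_isStrictMaxAt_on_eighthArc k
  rw [(hg x hx).eq h₁ hmax₁, (hg y hy).eq h₂ hmax₂]

lemma exists_abs_sub_div_eight_le {x δ : ℝ} (h : ¬∃ k, x ∈ eighthArc k ∧ x + δ ∈ eighthArc k) :
    ∃ k : ℤ, |x - k / 8| ≤ |δ| := by
  have h₁ : (⌊8 * x⌋ : ℝ) ≤ 8 * x := Int.floor_le _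
  have h₂ : 8 * x < ⌊8 * x⌋ + 1 := Int.lt_floor_add_one _
  rcases h₁.eq_or_lt with h₁ | h₁
  · exact ⟨⌊8 * x⌋, by rw [h₁]; simp⟩
  have hxδ : x + δ ∉ eighthArc ⌊8 * x⌋ := fun hy => h ⟨_, ⟨by linarith, by linarith⟩, hy⟩
  rw [eighthArc, mem_Ioo, not_and_or, not_lt, not_lt] at hxδ
  rcases hxδ with hδ | hδ
  · refine ⟨⌊8 * x⌋, ?_⟩
    rw [abs_of_pos (by linarith)]
    exact le_abs.2 (Or.inr (by linarith))
  · refine ⟨⌊8 * x⌋ + 1, ?_⟩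
    push_cast
    rw [abs_of_neg (by linarith)]
    exact le_abs.2 (Or.inl (by linarith))

lemma lt_mul_of_abs_mul_sub_div_eight_lt {θ κ : ℝ}
    (hbad : ∀ (m : ℤ) (q : ℕ), 0 < q → κ / q ≤ |(q : ℝ) * θ - m|) {q : ℕ} (hq : 0 < q) {k : ℤ}
    {ε : ℝ} (h : |θ * q - k / 8| < ε) : κ < 64 * q * ε := by
  have hq' : (0 : ℝ) < q := by exact_mod_cast hq
  have hk := hbad k (8 * q) (by omega)
  rw [show ((8 * q : ℕ) : ℝ) * θ - k = 8 * (θ * q - k / 8) by push_cast; ring, abs_mul,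
    abs_of_pos (by norm_num : (0 : ℝ) < 8), div_le_iff₀ (by positivity)] at hk
  calc κ ≤ 8 * |θ * q - k / 8| * ((8 * q : ℕ) : ℝ) := hk
    _ < 8 * ε * (8 * q) := by push_cast; gcongr
    _ = 64 * q * ε := by ring

theorem irregular_far_from_n_general (θ : ℝ) (κ : ℝ)
    (hbad : ∀ (m : ℤ) (q : ℕ), 0 < q → κ / q ≤ |(q : ℝ) * θ - m|)
    (m : ℤ) (n : ℕ) (hn : 0 < n)
    (hconv : |(n : ℝ) * θ - m| < 1 / n)
    (γ : ℕ → ℂ) (hγ : IsGammaSeq θ γ) :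
    ∀ j : ℕ, n < j → γ j ≠ γ (j - n) → κ * n / 128 < (j : ℝ) - n := by
  intro j hj hirreg
  obtain ⟨r, rfl⟩ : ∃ r, j = r + n := ⟨j - n, by omega⟩
  have hr : 0 < r := by omega
  rw [Nat.add_sub_cancel] at hirreg
  obtain ⟨k, hk⟩ : ∃ k : ℤ, |θ * r - k / 8| ≤ |(n : ℝ) * θ - m| := by
    refine exists_abs_sub_div_eight_le fun ⟨k, hx, hy⟩ => hirreg ?_
    have hmax := hγ.phaseRe_le (j := r + n) (by omega) m
    rw [show θ * ((r + n : ℕ) : ℝ) - m = θ * r + (n * θ - m) by push_cast; ring] at hmax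
    exact eq_of_isMax_of_mem_eighthArc hy hx (hγ _ (by omega)).1 hmax (hγ r hr).1
      (by simpa using hγ.phaseRe_le hr 0)
  have hκr := lt_mul_of_abs_mul_sub_div_eight_lt hbad hr (hk.trans_lt hconv)
  have hn' : (0 : ℝ) < n := by exact_mod_cast hn
  have hr' : (0 : ℝ) < r := by exact_mod_cast hr
  rw [mul_one_div, lt_div_iff₀ hn'] at hκr
  push_cast
  linarith

/-- If θ is badly approximable with constant κ, m/n is a continued fraction
convergent of θ with n ≥ 128/κ, then every n-irregular index j satisfies
j − n > κn/128. -/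
theorem irregular_far_from_n (θ : ℝ) (hθ : θ ∈ Set.Ioo (0 : ℝ) 1) (hirr : Irrational θ)
    (κ : ℝ) (hκ : 0 < κ)
    (hbad : ∀ (m : ℤ) (q : ℕ), 0 < q → κ / q ≤ |(q : ℝ) * θ - m|)
    (m : ℤ) (n : ℕ) (hn : 0 < n) (hcop : Int.gcd m n = 1)
    (hconv : |(n : ℝ) * θ - m| < 1 / n) (hlarge : 128 / κ ≤ (n : ℝ))
    (γ : ℕ → ℂ) (hγ : IsGammaSeq θ γ) :
    ∀ j : ℕ, n < j → γ j ≠ γ (j - n) → κ * n / 128 < (j : ℝ) - n :=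
  irregular_far_from_n_general θ κ hbad m n hn hconv γ hγ
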